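/- Let A ∈ ℝ^{n×n} be positive definite (xᵀAx > 0 for all nonzero x), write H = (A + Aᵀ)/2 and S = (A − Aᵀ)/2. Let λ_min and λ_max be the minimum and maximum eigenvalues of the symmetric matrix H, and let μ_max be the maximum of the absolute values of the (complex) eigenvalues of S. Let B ∈ ℝ^{n×n} with ‖B‖ = τ, b ∈ ℝⁿ, θ ∈ [0,1), ω > 0 and Ω = ωI. Suppose F(x*) = 0 and ω + λ_min − τ > √(ω² + μ_max²) + θ(ω + λ_max + τ + √(ω² + μ_max²)). Then any sequence {x^k} in ℝⁿ satisfying ‖(ωI + H)x^{k+1} − [(ωI − S)x^k + B|x^k| + b]‖ ≤ θ‖F(x^k)‖ for all k ≥ 0 converges linearly to x* from any starting point x^0. -/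

import Mathlib

open Matrix Filter

/-- Componentwise absolute value of a vector in Euclidean space. -/
noncomputable def vabs {n : ℕ} (x : EuclideanSpace ℝ (Fin n)) : EuclideanSpace ℝ (Fin n) :=
  WithLp.toLp 2 (fun i => |x i|)

/-- A matrix acting on Euclidean space (so that vector norms are the Euclidean 2-norm). -/
noncomputable def mulV {n : ℕ} (M : Matrix (Fin n) (Fin n) ℝ) (x : EuclideanSpace ℝ (Fin n)) :
    EuclideanSpace ℝ (Fin n) :=
  Matrix.toEuclideanCLM (𝕜 := ℝ) M x

/-- Spectral norm of a real matrix: the operator norm induced by the Euclidean vector norm. -/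
noncomputable def spec {n : ℕ} (M : Matrix (Fin n) (Fin n) ℝ) : ℝ :=
  ‖Matrix.toEuclideanCLM (𝕜 := ℝ) M‖

/-- The GAVE residual function `F(x) = A x − B |x| − b`. -/
noncomputable def gaveF {n : ℕ} (A B : Matrix (Fin n) (Fin n) ℝ)
    (b : EuclideanSpace ℝ (Fin n)) (x : EuclideanSpace ℝ (Fin n)) : EuclideanSpace ℝ (Fin n) :=
  mulV A x - mulV B (vabs x) - b

/-- The AVE residual function `A x − |x| − b` (the GAVE with `B = I`). -/
noncomputable def aveF {n : ℕ} (A : Matrix (Fin n) (Fin n) ℝ)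
    (b : EuclideanSpace ℝ (Fin n)) (x : EuclideanSpace ℝ (Fin n)) : EuclideanSpace ℝ (Fin n) :=
  mulV A x - vabs x - b

/-- A sequence converges linearly to `xs`: the distances to `xs` contract by a fixed
factor `c < 1` at every step, and the sequence tends to `xs`. -/
def ConvergesLinearlyTo {n : ℕ} (x : ℕ → EuclideanSpace ℝ (Fin n))
    (xs : EuclideanSpace ℝ (Fin n)) : Prop :=
  (∃ c : ℝ, 0 ≤ c ∧ c < 1 ∧ ∀ k : ℕ, ‖x (k + 1) - xs‖ ≤ c * ‖x k - xs‖) ∧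
    Tendsto x atTop (nhds xs)


/-!
With `W = ωI + H` and `V = ωI - S` we have `A = W - V`, so `W x* = V x* + B|x*| + b` and the
error `e_k = x^k - x*` satisfies `W e_{k+1} = r_k + V e_k + B(|x^k| - |x*|)` with
`‖r_k‖ ≤ θ‖F(x^k)‖ ≤ θ(‖A‖ + τ)‖e_k‖`. The symmetric `W` has spectrum in
`[ω + λ_min, ω + λ_max]`, so it stretches every vector by at least `ω + λ_min` (positive by the
hypothesis) and `‖W‖ ≤ ω + λ_max`. As `S` is skew, `v ⊥ Sv`, so `‖Vv‖² = ω²‖v‖² + ‖Sv‖²`, while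
`‖S‖² = ‖SᵀS‖ = max |z|²` over the eigenvalues `z` of `S`; hence `‖V‖ ≤ √(ω² + μ_max²)` and
`‖A‖ ≤ ‖W‖ + ‖V‖`. This gives `‖e_{k+1}‖ ≤ c ‖e_k‖`, and the hypothesis says exactly `c < 1`.
-/

open scoped InnerProductSpace

section SpectralBounds

variable {n : ℕ}

lemma spec_nonneg (M : Matrix (Fin n) (Fin n) ℝ) : 0 ≤ spec M :=
  norm_nonneg _

lemma norm_mulV_le (M : Matrix (Fin n) (Fin n) ℝ) (v : EuclideanSpace ℝ (Fin n)) :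
    ‖mulV M v‖ ≤ spec M * ‖v‖ :=
  (toEuclideanCLM (𝕜 := ℝ) M).le_opNorm v

lemma mulV_sub (M : Matrix (Fin n) (Fin n) ℝ) (u v : EuclideanSpace ℝ (Fin n)) :
    mulV M (u - v) = mulV M u - mulV M v :=
  map_sub _ u v

lemma sub_mulV (M N : Matrix (Fin n) (Fin n) ℝ) (v : EuclideanSpace ℝ (Fin n)) :
    mulV (M - N) v = mulV M v - mulV N v := by
  simp [mulV]

lemma spec_sub_le (M N : Matrix (Fin n) (Fin n) ℝ) : spec (M - N) ≤ spec M + spec N := by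
  simpa [spec] using norm_sub_le (toEuclideanCLM (𝕜 := ℝ) M) (toEuclideanCLM (𝕜 := ℝ) N)

lemma spec_le_of_isHermitian {M : Matrix (Fin n) (Fin n) ℝ} (hM : M.IsHermitian) {C : ℝ}
    (hC : 0 ≤ C) (h : ∀ μ ∈ spectrum ℝ M, |μ| ≤ C) : spec M ≤ C := by
  have hT := (toEuclideanCLM (𝕜 := ℝ) M).spectralRadius_eq_nnnorm (hM.isSelfAdjoint.map _)
  rw [spectralRadius, AlgEquiv.spectrum_eq] at hT
  have : (‖toEuclideanCLM (𝕜 := ℝ) M‖₊ : ENNReal) ≤ (C.toNNReal : ENNReal) := by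
    rw [← hT]
    exact iSup₂_le fun μ hμ =>
      ENNReal.coe_le_coe.mpr ((Real.le_toNNReal_iff_coe_le hC).mpr (h μ hμ))
  exact (Real.le_toNNReal_iff_coe_le hC).mp (ENNReal.coe_le_coe.mp this)

lemma mul_norm_sq_le_inner_mulV {M : Matrix (Fin n) (Fin n) ℝ} (hM : M.IsHermitian) {c : ℝ}
    (h : ∀ μ ∈ spectrum ℝ M, c ≤ μ) (v : EuclideanSpace ℝ (Fin n)) :
    c * ‖v‖ ^ 2 ≤ ⟪v, mulV M v⟫_ℝ := by
  have hpsd : (M - algebraMap ℝ _ c).PosSemidef := by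
    refine posSemidef_iff_isHermitian_and_spectrum_nonneg.mpr
      ⟨hM.sub ((IsSelfAdjoint.all c).algebraMap _), ?_⟩
    rw [← spectrum.sub_singleton_eq]
    rintro _ ⟨μ, hμ, _, rfl, rfl⟩
    exact sub_nonneg.mpr (h μ hμ)
  have := (isPositive_toEuclideanLin_iff.mpr hpsd).inner_nonneg_right v
  rw [map_sub, LinearMap.sub_apply, inner_sub_right, Algebra.algebraMap_eq_smul_one] at this
  simpa [mulV, real_inner_smul_right, real_inner_self_eq_norm_sq,
    ← coe_toEuclideanCLM_eq_toEuclideanLin] using this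

lemma mul_norm_le_norm_mulV {M : Matrix (Fin n) (Fin n) ℝ} (hM : M.IsHermitian) {c : ℝ}
    (h : ∀ μ ∈ spectrum ℝ M, c ≤ μ) (v : EuclideanSpace ℝ (Fin n)) :
    c * ‖v‖ ≤ ‖mulV M v‖ := by
  rcases (norm_nonneg v).eq_or_lt with hv | hv
  · simp [← hv]
  refine le_of_mul_le_mul_right ?_ hv
  calc c * ‖v‖ * ‖v‖ = c * ‖v‖ ^ 2 := by ring
    _ ≤ ⟪v, mulV M v⟫_ℝ := mul_norm_sq_le_inner_mulV hM h v
    _ ≤ ‖v‖ * ‖mulV M v‖ := real_inner_le_norm _ _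
    _ = ‖mulV M v‖ * ‖v‖ := mul_comm _ _

lemma spec_conjTranspose_mul_self (M : Matrix (Fin n) (Fin n) ℝ) :
    spec (Mᴴ * M) = spec M ^ 2 := by
  rw [spec, spec, ← star_eq_conjTranspose, map_mul, map_star, sq]
  exact ContinuousLinearMap.norm_adjoint_comp_self _

lemma ofReal_mem_spectrum_map {M : Matrix (Fin n) (Fin n) ℝ} {μ : ℝ} (h : μ ∈ spectrum ℝ M) :
    (μ : ℂ) ∈ spectrum ℂ (M.map ((↑) : ℝ → ℂ)) := by
  rw [mem_spectrum_iff_isRoot_charpoly] at h ⊢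
  rw [show M.map ((↑) : ℝ → ℂ) = M.map Complex.ofRealHom from rfl, charpoly_map]
  simpa using h.map (f := Complex.ofRealHom)

lemma spec_le_of_skew {S : Matrix (Fin n) (Fin n) ℝ} (hS : Sᴴ = -S) {m : ℝ} (hm : 0 ≤ m)
    (h : ∀ z ∈ spectrum ℂ (S.map ((↑) : ℝ → ℂ)), ‖z‖ ≤ m) : spec S ≤ m := by
  have hSS : spec (Sᴴ * S) ≤ m ^ 2 := by
    refine spec_le_of_isHermitian (isHermitian_conjTranspose_mul_self S) (sq_nonneg m)
      fun μ hμ => ?_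
    have hc := ofReal_mem_spectrum_map hμ
    rw [hS, show ((-S) * S).map ((↑) : ℝ → ℂ) = -(S.map ((↑) : ℝ → ℂ)) ^ 2 by
        ext; simp [sq, Matrix.mul_apply],
      ← spectrum.neg_eq, Set.mem_neg, spectrum.map_pow_of_pos _ two_pos] at hc
    obtain ⟨z, hz, hz2⟩ := hc
    rw [← Real.norm_eq_abs, ← Complex.norm_real, ← norm_neg, ← hz2, norm_pow]
    gcongr
    exact h z hz
  rw [spec_conjTranspose_mul_self] at hSS
  exact (pow_le_pow_iff_left₀ (spec_nonneg S) hm two_ne_zero).mp hSS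

lemma inner_mulV_self_eq_zero_of_skew {S : Matrix (Fin n) (Fin n) ℝ} (hS : Sᴴ = -S)
    (v : EuclideanSpace ℝ (Fin n)) : ⟪v, mulV S v⟫_ℝ = 0 := by
  have hadj : ContinuousLinearMap.adjoint (toEuclideanCLM (𝕜 := ℝ) S) =
      -toEuclideanCLM (𝕜 := ℝ) S := by
    rw [← ContinuousLinearMap.star_eq_adjoint, ← map_star, star_eq_conjTranspose, hS, map_neg]
  have h := ContinuousLinearMap.adjoint_inner_left (toEuclideanCLM (𝕜 := ℝ) S) v v
  rw [hadj, _root_.neg_apply, inner_neg_left, real_inner_comm] at h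
  rw [mulV]
  linarith

lemma spec_smul_one_sub_le_of_skew {S : Matrix (Fin n) (Fin n) ℝ} (hS : Sᴴ = -S) {m : ℝ}
    (hm : 0 ≤ m) (h : ∀ z ∈ spectrum ℂ (S.map ((↑) : ℝ → ℂ)), ‖z‖ ≤ m) (ω : ℝ) :
    spec (ω • 1 - S) ≤ √(ω ^ 2 + m ^ 2) := by
  refine ContinuousLinearMap.opNorm_le_bound _ (Real.sqrt_nonneg _) fun v => ?_
  have hv : toEuclideanCLM (𝕜 := ℝ) (ω • 1 - S) v = ω • v - mulV S v := by
    simp [mulV]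
  have hSv : ‖mulV S v‖ ≤ m * ‖v‖ :=
    (norm_mulV_le S v).trans (by gcongr; exact spec_le_of_skew hS hm h)
  have hsq : ‖ω • v - mulV S v‖ ^ 2 = ω ^ 2 * ‖v‖ ^ 2 + ‖mulV S v‖ ^ 2 := by
    rw [norm_sub_sq_real, real_inner_smul_left, inner_mulV_self_eq_zero_of_skew hS, norm_smul,
      mul_pow, Real.norm_eq_abs, sq_abs]
    ring
  rw [hv, ← pow_le_pow_iff_left₀ (norm_nonneg _) (by positivity) two_ne_zero, hsq, mul_pow,
    Real.sq_sqrt (by positivity)]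
  nlinarith [norm_nonneg (mulV S v), mul_nonneg hm (norm_nonneg v)]

end SpectralBounds

section GAVE

variable {n : ℕ}

lemma norm_vabs_sub_vabs_le (x y : EuclideanSpace ℝ (Fin n)) :
    ‖vabs x - vabs y‖ ≤ ‖x - y‖ := by
  rw [EuclideanSpace.norm_eq, EuclideanSpace.norm_eq]
  gcongr with i
  simpa [vabs] using abs_abs_sub_abs_le_abs_sub (x i) (y i)

lemma gaveF_eq_of_gaveF_eq_zero {A B : Matrix (Fin n) (Fin n) ℝ} {b xs : EuclideanSpace ℝ (Fin n)}
    (hxs : gaveF A B b xs = 0) (y : EuclideanSpace ℝ (Fin n)) :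
    gaveF A B b y = mulV A (y - xs) - mulV B (vabs y - vabs xs) := by
  rw [← sub_zero (gaveF A B b y), ← hxs, gaveF, gaveF, mulV_sub, mulV_sub]
  abel

lemma norm_gaveF_le {A B : Matrix (Fin n) (Fin n) ℝ} {b xs : EuclideanSpace ℝ (Fin n)}
    (hxs : gaveF A B b xs = 0) (y : EuclideanSpace ℝ (Fin n)) :
    ‖gaveF A B b y‖ ≤ (spec A + spec B) * ‖y - xs‖ := by
  rw [gaveF_eq_of_gaveF_eq_zero hxs]
  calc _ ≤ ‖mulV A (y - xs)‖ + ‖mulV B (vabs y - vabs xs)‖ := norm_sub_le _ _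
    _ ≤ spec A * ‖y - xs‖ + spec B * ‖y - xs‖ := by
      gcongr
      · exact norm_mulV_le A _
      · exact (norm_mulV_le B _).trans
          (mul_le_mul_of_nonneg_left (norm_vabs_sub_vabs_le y xs) (spec_nonneg B))
    _ = (spec A + spec B) * ‖y - xs‖ := by ring

lemma mul_norm_sub_le_of_inexact_step {A B W V : Matrix (Fin n) (Fin n) ℝ}
    {b xs x y : EuclideanSpace ℝ (Fin n)} (hA : A = W - V) (hxs : gaveF A B b xs = 0)
    {d θ : ℝ} (hθ : 0 ≤ θ) (hW : ∀ v, d * ‖v‖ ≤ ‖mulV W v‖)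
    (hy : ‖mulV W y - (mulV V x + mulV B (vabs x) + b)‖ ≤ θ * ‖gaveF A B b x‖) :
    d * ‖y - xs‖ ≤ (spec V + spec B + θ * (spec A + spec B)) * ‖x - xs‖ := by
  have hWxs : mulV W xs = mulV V xs + mulV B (vabs xs) + b := by
    rw [gaveF, hA, sub_mulV] at hxs
    rw [← sub_eq_zero, ← hxs]
    abel
  have hsplit : mulV W (y - xs) = (mulV W y - (mulV V x + mulV B (vabs x) + b)) +
      mulV V (x - xs) + mulV B (vabs x - vabs xs) := by
    rw [mulV_sub, mulV_sub, mulV_sub, hWxs]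
    abel
  calc d * ‖y - xs‖ ≤ ‖mulV W (y - xs)‖ := hW _
    _ ≤ θ * ‖gaveF A B b x‖ + ‖mulV V (x - xs)‖ + ‖mulV B (vabs x - vabs xs)‖ := by
      rw [hsplit]
      exact (norm_add₃_le ..).trans (by gcongr)
    _ ≤ θ * ((spec A + spec B) * ‖x - xs‖) + spec V * ‖x - xs‖ + spec B * ‖x - xs‖ := by
      gcongr
      · exact norm_gaveF_le hxs x
      · exact norm_mulV_le V _
      · exact (norm_mulV_le B _).trans
          (mul_le_mul_of_nonneg_left (norm_vabs_sub_vabs_le x xs) (spec_nonneg B))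
    _ = (spec V + spec B + θ * (spec A + spec B)) * ‖x - xs‖ := by ring

lemma convergesLinearlyTo_of_contraction {x : ℕ → EuclideanSpace ℝ (Fin n)}
    {xs : EuclideanSpace ℝ (Fin n)} {c : ℝ} (hc0 : 0 ≤ c) (hc1 : c < 1)
    (h : ∀ k, ‖x (k + 1) - xs‖ ≤ c * ‖x k - xs‖) : ConvergesLinearlyTo x xs := by
  refine ⟨⟨c, hc0, hc1, h⟩, ?_⟩
  have hgeo : ∀ k, ‖x k - xs‖ ≤ c ^ k * ‖x 0 - xs‖ := by
    intro k
    induction k with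
    | zero => simp
    | succ k ih => calc
        ‖x (k + 1) - xs‖ ≤ c * (c ^ k * ‖x 0 - xs‖) := (h k).trans (by gcongr)
        _ = c ^ (k + 1) * ‖x 0 - xs‖ := by ring
  rw [tendsto_iff_norm_sub_tendsto_zero]
  refine squeeze_zero (fun k => norm_nonneg _) hgeo ?_
  simpa using (tendsto_pow_atTop_nhds_zero_of_lt_one hc0 hc1).mul_const ‖x 0 - xs‖

end GAVE

lemma isHermitian_smul_add_transpose {n : ℕ} (c : ℝ) (A : Matrix (Fin n) (Fin n) ℝ) :
    (c • (A + Aᵀ)).IsHermitian := by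
  rw [← conjTranspose_eq_transpose_of_trivial]
  exact (isHermitian_add_transpose_self A).smul (.all c)

lemma conjTranspose_smul_sub_transpose {n : ℕ} (c : ℝ) (A : Matrix (Fin n) (Fin n) ℝ) :
    (c • (A - Aᵀ))ᴴ = -(c • (A - Aᵀ)) := by
  rw [← conjTranspose_eq_transpose_of_trivial, conjTranspose_smul, conjTranspose_sub,
    conjTranspose_conjTranspose, star_trivial, ← smul_neg, neg_sub]

lemma contraction_factor_lt_one {d l r τ θ : ℝ} (hr : 0 ≤ r) (hτ : 0 ≤ τ) (hθ0 : 0 ≤ θ)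
    (hθ1 : θ < 1) (hdl : d ≤ l) (h : d - τ > r + θ * (l + τ + r)) :
    0 < d ∧ 0 ≤ l ∧ 0 ≤ (r + τ + θ * (l + τ + r)) / d ∧ (r + τ + θ * (l + τ + r)) / d < 1 := by
  have hX : 0 ≤ l + τ + r := by
    by_contra! hX
    nlinarith [mul_nonpos_of_nonneg_of_nonpos (sub_nonneg.mpr hθ1.le) hX.le]
  have hd : 0 < d := by nlinarith [mul_nonneg hθ0 hX]
  exact ⟨hd, by linarith, by positivity, (div_lt_one hd).mpr (by linarith)⟩

theorem stmt13_general {n : ℕ} (A B H S : Matrix (Fin n) (Fin n) ℝ)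
    (b : EuclideanSpace ℝ (Fin n))
    (hH : H = (2 : ℝ)⁻¹ • (A + Aᵀ)) (hS : S = (2 : ℝ)⁻¹ • (A - Aᵀ))
    (lammin lammax mumax τ : ℝ)
    (hmin : IsLeast (spectrum ℝ H) lammin) (hmax : IsGreatest (spectrum ℝ H) lammax)
    (hmu : IsGreatest ((fun z : ℂ => ‖z‖) ''
      spectrum ℂ (S.map ((↑) : ℝ → ℂ))) mumax)
    (hτ : spec B = τ) (θ ω : ℝ) (hθ0 : 0 ≤ θ) (hθ1 : θ < 1)
    (xs : EuclideanSpace ℝ (Fin n)) (hxs : gaveF A B b xs = 0)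
    (hcond : ω + lammin - τ > Real.sqrt (ω ^ 2 + mumax ^ 2) +
      θ * (ω + lammax + τ + Real.sqrt (ω ^ 2 + mumax ^ 2)))
    (x : ℕ → EuclideanSpace ℝ (Fin n))
    (hx : ∀ k : ℕ, ‖mulV (ω • (1 : Matrix (Fin n) (Fin n) ℝ) + H) (x (k + 1)) -
        (mulV (ω • (1 : Matrix (Fin n) (Fin n) ℝ) - S) (x k) + mulV B (vabs (x k)) + b)‖ ≤
      θ * ‖gaveF A B b (x k)‖) :
    ConvergesLinearlyTo x xs := by
  have hW : (ω • 1 + H).IsHermitian :=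
    (isHermitian_one.smul (.all ω)).add (hH ▸ isHermitian_smul_add_transpose _ A)
  have hσW : ∀ μ ∈ spectrum ℝ (ω • 1 + H), ω + lammin ≤ μ ∧ μ ≤ ω + lammax := fun μ hμ =>
    have hμ' : μ - ω ∈ spectrum ℝ H := spectrum.add_mem_add_iff.mp <| by
      rwa [sub_add_cancel, Algebra.algebraMap_eq_smul_one]
    ⟨by linarith [hmin.2 hμ'], by linarith [hmax.2 hμ']⟩
  have hτ0 : 0 ≤ τ := hτ ▸ spec_nonneg B
  obtain ⟨hd, hl, hc0, hc1⟩ := contraction_factor_lt_one (Real.sqrt_nonneg _) hτ0 hθ0 hθ1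
    (by linarith [hmax.2 hmin.1]) hcond
  have hspecV : spec (ω • 1 - S) ≤ √(ω ^ 2 + mumax ^ 2) :=
    spec_smul_one_sub_le_of_skew (hS ▸ conjTranspose_smul_sub_transpose _ A)
      (by obtain ⟨z, -, rfl⟩ := hmu.1; exact norm_nonneg z) (fun z hz => hmu.2 ⟨z, hz, rfl⟩) ω
  have hspecW : spec (ω • 1 + H) ≤ ω + lammax := spec_le_of_isHermitian hW hl
    fun μ hμ => abs_le.mpr ⟨by linarith [hσW μ hμ], (hσW μ hμ).2⟩
  have hA : A = (ω • 1 + H) - (ω • 1 - S) := by rw [hH, hS]; module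
  have hspecA : spec A ≤ ω + lammax + √(ω ^ 2 + mumax ^ 2) :=
    hA ▸ (spec_sub_le _ _).trans (add_le_add hspecW hspecV)
  refine convergesLinearlyTo_of_contraction hc0 hc1 fun k => ?_
  rw [div_mul_eq_mul_div, le_div_iff₀ hd, mul_comm, ← hτ]
  refine (mul_norm_sub_le_of_inexact_step hA hxs hθ0
    (mul_norm_le_norm_mulV hW fun μ hμ => (hσW μ hμ).1) (hx k)).trans ?_
  exact mul_le_mul_of_nonneg_right (add_le_add (add_le_add hspecV le_rfl)
    (mul_le_mul_of_nonneg_left (by linarith) hθ0)) (norm_nonneg _)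

theorem stmt13 {n : ℕ} (A B H S : Matrix (Fin n) (Fin n) ℝ)
    (b : EuclideanSpace ℝ (Fin n))
    (hposdef : ∀ v : Fin n → ℝ, v ≠ 0 → 0 < v ⬝ᵥ A.mulVec v)
    (hH : H = (2 : ℝ)⁻¹ • (A + Aᵀ)) (hS : S = (2 : ℝ)⁻¹ • (A - Aᵀ))
    (lammin lammax mumax τ : ℝ)
    (hmin : IsLeast (spectrum ℝ H) lammin) (hmax : IsGreatest (spectrum ℝ H) lammax)
    (hmu : IsGreatest ((fun z : ℂ => ‖z‖) ''
      spectrum ℂ (S.map ((↑) : ℝ → ℂ))) mumax)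
    (hτ : spec B = τ) (θ ω : ℝ) (hθ0 : 0 ≤ θ) (hθ1 : θ < 1) (hω : 0 < ω)
    (xs : EuclideanSpace ℝ (Fin n)) (hxs : gaveF A B b xs = 0)
    (hcond : ω + lammin - τ > Real.sqrt (ω ^ 2 + mumax ^ 2) +
      θ * (ω + lammax + τ + Real.sqrt (ω ^ 2 + mumax ^ 2)))
    (x : ℕ → EuclideanSpace ℝ (Fin n))
    (hx : ∀ k : ℕ, ‖mulV (ω • (1 : Matrix (Fin n) (Fin n) ℝ) + H) (x (k + 1)) -
        (mulV (ω • (1 : Matrix (Fin n) (Fin n) ℝ) - S) (x k) + mulV B (vabs (x k)) + b)‖ ≤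
      θ * ‖gaveF A B b (x k)‖) :
    ConvergesLinearlyTo x xs :=
  stmt13_general A B H S b hH hS lammin lammax mumax τ hmin hmax hmu hτ θ ω hθ0 hθ1 xs hxs hcond x
    hx
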